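/- Let R be an algebraic curvature operator on a Euclidean vector space V of dimension n ≥ 4, and let λ_1 ≤ … ≤ λ_N be the eigenvalues of the curvature operator of the second kind R̊ restricted to traceless symmetric two-tensors, where N = (n−1)(n+2)/2. If λ_1 + λ_2 + λ_3 + λ_4 + ½λ_5 > 0, then R has positive isotropic curvature: for every orthonormal four-frame e_1,e_2,e_3,e_4, R_{1313}+R_{1414}+R_{2323}+R_{2424}−2R_{1234} > 0. -/
import Mathlib


open scoped BigOperators

/-- The symmetric product `u ⊙ v = u ⊗ v + v ⊗ u`, as a matrix in standard coordinates. -/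
def sym2 {n : ℕ} (u v : Fin n → ℝ) : Matrix (Fin n) (Fin n) ℝ :=
  Matrix.of fun i j => u i * v j + v i * u j

/-- The inner product `⟨A, B⟩ = tr(Aᵀ B)` on two-tensors. -/
def minner {n : ℕ} (A B : Matrix (Fin n) (Fin n) ℝ) : ℝ :=
  ∑ i, ∑ j, A i j * B i j

/-- The curvature operator of the second kind as a bilinear form on symmetric two-tensors:
`R̊(h₁,h₂) = Σ R_{iklj} (h₁)_{ij} (h₂)_{kl}`. -/
def Rsec {n : ℕ} (R : Fin n → Fin n → Fin n → Fin n → ℝ)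
    (h₁ h₂ : Matrix (Fin n) (Fin n) ℝ) : ℝ :=
  ∑ i, ∑ j, ∑ k, ∑ l, R i k l j * h₁ i j * h₂ k l

/-- Multilinear evaluation of the curvature tensor on vectors. -/
def Rap {n : ℕ} (R : Fin n → Fin n → Fin n → Fin n → ℝ) (u v w x : Fin n → ℝ) : ℝ :=
  ∑ i, ∑ j, ∑ k, ∑ l, R i j k l * u i * v j * w k * x l

/-- An algebraic curvature tensor: antisymmetric in each pair, symmetric in pairs,
first Bianchi identity. -/
def IsAlgCurv {n : ℕ} (R : Fin n → Fin n → Fin n → Fin n → ℝ) : Prop :=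
  (∀ i j k l, R i j k l = - R j i k l) ∧ (∀ i j k l, R i j k l = - R i j l k) ∧
  (∀ i j k l, R i j k l = R k l i j) ∧
  (∀ i j k l, R i j k l + R i k l j + R i l j k = 0)

/-- An orthonormal family of vectors in Euclidean space. -/
def OrthonormalFam {n m : ℕ} (v : Fin m → Fin n → ℝ) : Prop :=
  ∀ a b, (∑ k, v a k * v b k) = if a = b then (1 : ℝ) else 0

set_option linter.dupNamespace false

namespace S5

/-- outer product matrix -/
def outer (u v : Fin n → ℝ) : Matrix (Fin n) (Fin n) ℝ := Matrix.of fun i j => u i * v j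

abbrev Q (n : ℕ) := Fin n × Fin n × Fin n × Fin n

lemma sum4_eq (f : Fin n → Fin n → Fin n → Fin n → ℝ) :
    (∑ i, ∑ j, ∑ k, ∑ l, f i j k l)
      = ∑ p : Q n, f p.1 p.2.1 p.2.2.1 p.2.2.2 := by
  simp [Fintype.sum_prod_type]

lemma sum2_eq (f : Fin n → Fin n → ℝ) :
    (∑ i, ∑ j, f i j) = ∑ p : Fin n × Fin n, f p.1 p.2 := by
  simp [Fintype.sum_prod_type]

lemma Rap_eq (R : Fin n → Fin n → Fin n → Fin n → ℝ) (u v w x : Fin n → ℝ) :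
    Rap R u v w x = ∑ p : Q n, R p.1 p.2.1 p.2.2.1 p.2.2.2 * u p.1 * v p.2.1 * w p.2.2.1 * x p.2.2.2 :=
  sum4_eq _

lemma Rsec_eq (R : Fin n → Fin n → Fin n → Fin n → ℝ) (A B : Matrix (Fin n) (Fin n) ℝ) :
    Rsec R A B = ∑ p : Q n, R p.1 p.2.2.1 p.2.2.2 p.2.1 * A p.1 p.2.1 * B p.2.2.1 p.2.2.2 :=
  sum4_eq _

lemma minner_eq (A B : Matrix (Fin n) (Fin n) ℝ) :
    minner A B = ∑ p : Fin n × Fin n, A p.1 p.2 * B p.1 p.2 :=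
  sum2_eq _

/-- permutation equivalences on quadruples -/
def eSwap12 : Q n ≃ Q n :=
  ⟨fun p => (p.2.1, p.1, p.2.2), fun p => (p.2.1, p.1, p.2.2), fun _ => rfl, fun _ => rfl⟩

def eSwap34 : Q n ≃ Q n :=
  ⟨fun p => (p.1, p.2.1, p.2.2.2, p.2.2.1), fun p => (p.1, p.2.1, p.2.2.2, p.2.2.1),
   fun _ => rfl, fun _ => rfl⟩

def ePair : Q n ≃ Q n :=
  ⟨fun p => (p.2.2.1, p.2.2.2, p.1, p.2.1), fun p => (p.2.2.1, p.2.2.2, p.1, p.2.1),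
   fun _ => rfl, fun _ => rfl⟩

/-- (i,j,k,l) ↦ (i,k,l,j) -/
def eCyc : Q n ≃ Q n :=
  ⟨fun p => (p.1, p.2.2.1, p.2.2.2, p.2.1), fun p => (p.1, p.2.2.2, p.2.1, p.2.2.1),
   fun _ => rfl, fun _ => rfl⟩

/-- (i,j,k,l) ↦ (i,l,j,k) -/
def eCyc' : Q n ≃ Q n :=
  ⟨fun p => (p.1, p.2.2.2, p.2.1, p.2.2.1), fun p => (p.1, p.2.2.1, p.2.2.2, p.2.1),
   fun _ => rfl, fun _ => rfl⟩


variable {n : ℕ} {R : Fin n → Fin n → Fin n → Fin n → ℝ}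

lemma Rap_swap12 (hR : IsAlgCurv R) (u v w x : Fin n → ℝ) :
    Rap R u v w x = - Rap R v u w x := by
  rw [Rap_eq, Rap_eq, ← Equiv.sum_comp (eSwap12 (n := n))
    (fun p : Q n => R p.1 p.2.1 p.2.2.1 p.2.2.2 * v p.1 * u p.2.1 * w p.2.2.1 * x p.2.2.2),
    ← Finset.sum_neg_distrib]
  refine Finset.sum_congr rfl fun p _ => ?_
  have h := hR.1 p.1 p.2.1 p.2.2.1 p.2.2.2
  simp only [eSwap12, Equiv.coe_fn_mk]
  linear_combination (u p.1 * v p.2.1 * w p.2.2.1 * x p.2.2.2) * h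

lemma Rap_swap34 (hR : IsAlgCurv R) (u v w x : Fin n → ℝ) :
    Rap R u v w x = - Rap R u v x w := by
  rw [Rap_eq, Rap_eq, ← Equiv.sum_comp (eSwap34 (n := n))
    (fun p : Q n => R p.1 p.2.1 p.2.2.1 p.2.2.2 * u p.1 * v p.2.1 * x p.2.2.1 * w p.2.2.2),
    ← Finset.sum_neg_distrib]
  refine Finset.sum_congr rfl fun p _ => ?_
  have h := hR.2.1 p.1 p.2.1 p.2.2.1 p.2.2.2
  simp only [eSwap34, Equiv.coe_fn_mk]
  linear_combination (u p.1 * v p.2.1 * w p.2.2.1 * x p.2.2.2) * h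

lemma Rap_pair (hR : IsAlgCurv R) (u v w x : Fin n → ℝ) :
    Rap R u v w x = Rap R w x u v := by
  rw [Rap_eq, Rap_eq, ← Equiv.sum_comp (ePair (n := n))
    (fun p : Q n => R p.1 p.2.1 p.2.2.1 p.2.2.2 * w p.1 * x p.2.1 * u p.2.2.1 * v p.2.2.2)]
  refine Finset.sum_congr rfl fun p _ => ?_
  have h := hR.2.2.1 p.1 p.2.1 p.2.2.1 p.2.2.2
  simp only [ePair, Equiv.coe_fn_mk]
  linear_combination (u p.1 * v p.2.1 * w p.2.2.1 * x p.2.2.2) * h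

lemma Rap_bianchi (hR : IsAlgCurv R) (u v w x : Fin n → ℝ) :
    Rap R u v w x + Rap R u w x v + Rap R u x v w = 0 := by
  rw [Rap_eq, Rap_eq, Rap_eq,
    ← Equiv.sum_comp (eCyc (n := n))
      (fun p : Q n => R p.1 p.2.1 p.2.2.1 p.2.2.2 * u p.1 * w p.2.1 * x p.2.2.1 * v p.2.2.2),
    ← Equiv.sum_comp (eCyc' (n := n))
      (fun p : Q n => R p.1 p.2.1 p.2.2.1 p.2.2.2 * u p.1 * x p.2.1 * v p.2.2.1 * w p.2.2.2),
    ← Finset.sum_add_distrib, ← Finset.sum_add_distrib]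
  rw [show (0:ℝ) = ∑ _p : Q n, (0:ℝ) by simp]
  refine Finset.sum_congr rfl fun p _ => ?_
  have h := hR.2.2.2 p.1 p.2.1 p.2.2.1 p.2.2.2
  simp only [eCyc, eCyc', Equiv.coe_fn_mk]
  linear_combination (u p.1 * v p.2.1 * w p.2.2.1 * x p.2.2.2) * h

lemma Rsec_outer (u v w x : Fin n → ℝ) :
    Rsec R (outer u v) (outer w x) = Rap R u w x v := by
  rw [Rsec_eq, Rap_eq, ← Equiv.sum_comp (eCyc (n := n))
    (fun p : Q n => R p.1 p.2.1 p.2.2.1 p.2.2.2 * u p.1 * w p.2.1 * x p.2.2.1 * v p.2.2.2)]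
  refine Finset.sum_congr rfl fun p _ => ?_
  simp only [eCyc, Equiv.coe_fn_mk, outer, Matrix.of_apply]
  ring

lemma Rsec_add_left (A B C : Matrix (Fin n) (Fin n) ℝ) :
    Rsec R (A + B) C = Rsec R A C + Rsec R B C := by
  simp only [Rsec_eq, Matrix.add_apply, ← Finset.sum_add_distrib]
  exact Finset.sum_congr rfl fun p _ => by ring

lemma Rsec_sub_left (A B C : Matrix (Fin n) (Fin n) ℝ) :
    Rsec R (A - B) C = Rsec R A C - Rsec R B C := by
  simp only [Rsec_eq, Matrix.sub_apply, ← Finset.sum_sub_distrib]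
  exact Finset.sum_congr rfl fun p _ => by ring

lemma Rsec_smul_left (c : ℝ) (A B : Matrix (Fin n) (Fin n) ℝ) :
    Rsec R (c • A) B = c * Rsec R A B := by
  simp only [Rsec_eq, Matrix.smul_apply, smul_eq_mul, Finset.mul_sum]
  exact Finset.sum_congr rfl fun p _ => by ring

lemma Rsec_add_right (A B C : Matrix (Fin n) (Fin n) ℝ) :
    Rsec R A (B + C) = Rsec R A B + Rsec R A C := by
  simp only [Rsec_eq, Matrix.add_apply, ← Finset.sum_add_distrib]
  exact Finset.sum_congr rfl fun p _ => by ring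

lemma Rsec_sub_right (A B C : Matrix (Fin n) (Fin n) ℝ) :
    Rsec R A (B - C) = Rsec R A B - Rsec R A C := by
  simp only [Rsec_eq, Matrix.sub_apply, ← Finset.sum_sub_distrib]
  exact Finset.sum_congr rfl fun p _ => by ring

lemma Rsec_smul_right (c : ℝ) (A B : Matrix (Fin n) (Fin n) ℝ) :
    Rsec R A (c • B) = c * Rsec R A B := by
  simp only [Rsec_eq, Matrix.smul_apply, smul_eq_mul, Finset.mul_sum]
  exact Finset.sum_congr rfl fun p _ => by ring

lemma Rsec_sum_left {α : Type*} (s : Finset α) (f : α → Matrix (Fin n) (Fin n) ℝ)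
    (B : Matrix (Fin n) (Fin n) ℝ) :
    Rsec R (∑ a ∈ s, f a) B = ∑ a ∈ s, Rsec R (f a) B := by
  simp only [Rsec_eq, Matrix.sum_apply, Finset.sum_mul, Finset.mul_sum]
  exact Finset.sum_comm

lemma Rsec_sum_right {α : Type*} (s : Finset α) (f : α → Matrix (Fin n) (Fin n) ℝ)
    (B : Matrix (Fin n) (Fin n) ℝ) :
    Rsec R B (∑ a ∈ s, f a) = ∑ a ∈ s, Rsec R B (f a) := by
  simp only [Rsec_eq, Matrix.sum_apply, Finset.sum_mul, Finset.mul_sum]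
  exact Finset.sum_comm

lemma sym2_eq (u v : Fin n → ℝ) : sym2 u v = outer u v + outer v u := by
  ext i j; simp [sym2, outer]



lemma minner_add_left (A B C : Matrix (Fin n) (Fin n) ℝ) :
    minner (A + B) C = minner A C + minner B C := by
  simp only [minner_eq, Matrix.add_apply, ← Finset.sum_add_distrib]
  exact Finset.sum_congr rfl fun p _ => by ring

lemma minner_sub_left (A B C : Matrix (Fin n) (Fin n) ℝ) :
    minner (A - B) C = minner A C - minner B C := by
  simp only [minner_eq, Matrix.sub_apply, ← Finset.sum_sub_distrib]
  exact Finset.sum_congr rfl fun p _ => by ring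

lemma minner_smul_left (c : ℝ) (A B : Matrix (Fin n) (Fin n) ℝ) :
    minner (c • A) B = c * minner A B := by
  simp only [minner_eq, Matrix.smul_apply, smul_eq_mul, Finset.mul_sum]
  exact Finset.sum_congr rfl fun p _ => by ring

lemma minner_add_right (A B C : Matrix (Fin n) (Fin n) ℝ) :
    minner A (B + C) = minner A B + minner A C := by
  simp only [minner_eq, Matrix.add_apply, ← Finset.sum_add_distrib]
  exact Finset.sum_congr rfl fun p _ => by ring

lemma minner_sub_right (A B C : Matrix (Fin n) (Fin n) ℝ) :
    minner A (B - C) = minner A B - minner A C := by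
  simp only [minner_eq, Matrix.sub_apply, ← Finset.sum_sub_distrib]
  exact Finset.sum_congr rfl fun p _ => by ring

lemma minner_smul_right (c : ℝ) (A B : Matrix (Fin n) (Fin n) ℝ) :
    minner A (c • B) = c * minner A B := by
  simp only [minner_eq, Matrix.smul_apply, smul_eq_mul, Finset.mul_sum]
  exact Finset.sum_congr rfl fun p _ => by ring

lemma minner_sum_left {α : Type*} (s : Finset α) (f : α → Matrix (Fin n) (Fin n) ℝ)
    (B : Matrix (Fin n) (Fin n) ℝ) :
    minner (∑ a ∈ s, f a) B = ∑ a ∈ s, minner (f a) B := by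
  simp only [minner_eq, Matrix.sum_apply, Finset.sum_mul, Finset.mul_sum]
  exact Finset.sum_comm

lemma minner_sum_right {α : Type*} (s : Finset α) (f : α → Matrix (Fin n) (Fin n) ℝ)
    (B : Matrix (Fin n) (Fin n) ℝ) :
    minner B (∑ a ∈ s, f a) = ∑ a ∈ s, minner B (f a) := by
  simp only [minner_eq, Matrix.sum_apply, Finset.sum_mul, Finset.mul_sum]
  exact Finset.sum_comm

lemma minner_comm (A B : Matrix (Fin n) (Fin n) ℝ) : minner A B = minner B A := by
  simp only [minner_eq]
  exact Finset.sum_congr rfl fun p _ => by ring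

lemma minner_self_nonneg (A : Matrix (Fin n) (Fin n) ℝ) : 0 ≤ minner A A := by
  rw [minner_eq]
  exact Finset.sum_nonneg fun p _ => mul_self_nonneg _

lemma minner_self_pos (A : Matrix (Fin n) (Fin n) ℝ) (hA : A ≠ 0) : 0 < minner A A := by
  rcases lt_or_eq_of_le (minner_self_nonneg A) with h | h
  · exact h
  · exfalso; apply hA
    have h0 : ∀ p ∈ (Finset.univ : Finset (Fin n × Fin n)), A p.1 p.2 * A p.1 p.2 = 0 := by
      rw [← Finset.sum_eq_zero_iff_of_nonneg (fun p _ => mul_self_nonneg _), ← minner_eq A A, ← h]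
    ext i j
    have := h0 (i, j) (Finset.mem_univ _)
    simpa [mul_self_eq_zero] using this

lemma minner_outer (u v w x : Fin n → ℝ) :
    minner (outer u v) (outer w x) = (∑ k, u k * w k) * (∑ k, v k * x k) := by
  rw [minner_eq, Finset.sum_mul_sum, sum2_eq]
  exact Finset.sum_congr rfl fun p _ => by simp [outer]; ring

lemma trace_outer (u v : Fin n → ℝ) : (outer u v).trace = ∑ k, u k * v k := by
  simp [Matrix.trace, Matrix.diag, outer]



noncomputable def Gt (a b c d : Fin n → ℝ) : Fin 7 → Matrix (Fin n) (Fin n) ℝ := fun i =>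
  match i with
  | 0 => (1/2 : ℝ) • ((outer a c + outer c a) + (outer b d + outer d b))
  | 1 => (1/2 : ℝ) • ((outer a d + outer d a) - (outer b c + outer c b))
  | 2 => (1/2 : ℝ) • ((outer a c + outer c a) - (outer b d + outer d b))
  | 3 => (1/2 : ℝ) • ((outer a d + outer d a) + (outer b c + outer c b))
  | 4 => (1/2 : ℝ) • ((outer a a + outer b b) - (outer c c + outer d d))
  | 5 => (1/2 : ℝ) • ((outer a b + outer b a) + (outer c d + outer d c))
  | 6 => (1/2 : ℝ) • ((outer a b + outer b a) - (outer c d + outer d c))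

noncomputable def wt : Fin 7 → ℝ := fun i =>
  match i with
  | 0 => 8/9 | 1 => 8/9 | 2 => 2/9 | 3 => 2/9 | 4 => 8/9 | 5 => 4/9 | 6 => 4/9

set_option maxHeartbeats 1000000 in
lemma identityA (hR : IsAlgCurv R) (a b c d : Fin n → ℝ) :
    Rap R a c a c + Rap R a d a d + Rap R b c b c + Rap R b d b d - 2 * Rap R a b c d
      = ∑ i : Fin 7, wt i * Rsec R (Gt a b c d i) (Gt a b c d i) := by
  rw [Fin.sum_univ_seven]
  have hw0 : wt 0 = 8/9 := rfl
  have hw1 : wt 1 = 8/9 := rfl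
  have hw2 : wt 2 = 2/9 := rfl
  have hw3 : wt 3 = 2/9 := rfl
  have hw4 : wt 4 = 8/9 := rfl
  have hw5 : wt 5 = 4/9 := rfl
  have hw6 : wt 6 = 4/9 := rfl
  rw [hw0, hw1, hw2, hw3, hw4, hw5, hw6]
  have e0 : Rsec R (Gt a b c d 0) (Gt a b c d 0) = (1/4 : ℝ) * (Rap R a a c c) + (1/4 : ℝ) * (Rap R a b d c) + (1/4 : ℝ) * (Rap R a c a c) + (1/4 : ℝ) * (Rap R a d b c) + (1/4 : ℝ) * (Rap R b a c d) + (1/4 : ℝ) * (Rap R b b d d) + (1/4 : ℝ) * (Rap R b c a d) + (1/4 : ℝ) * (Rap R b d b d) + (1/4 : ℝ) * (Rap R c a c a) + (1/4 : ℝ) * (Rap R c b d a) + (1/4 : ℝ) * (Rap R c c a a) + (1/4 : ℝ) * (Rap R c d b a) + (1/4 : ℝ) * (Rap R d a c b) + (1/4 : ℝ) * (Rap R d b d b) + (1/4 : ℝ) * (Rap R d c a b) + (1/4 : ℝ) * (Rap R d d b b) := by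
    show Rsec R ((1/2 : ℝ) • ((outer a c + outer c a) + (outer b d + outer d b))) ((1/2 : ℝ) • ((outer a c + outer c a) + (outer b d + outer d b))) = _
    simp only [Rsec_smul_left, Rsec_smul_right, Rsec_add_left, Rsec_add_right, Rsec_sub_left, Rsec_sub_right, Rsec_outer]
    ring
  have e1 : Rsec R (Gt a b c d 1) (Gt a b c d 1) = (1/4 : ℝ) * (Rap R a a d d) + (-1/4 : ℝ) * (Rap R a b c d) + (-1/4 : ℝ) * (Rap R a c b d) + (1/4 : ℝ) * (Rap R a d a d) + (-1/4 : ℝ) * (Rap R b a d c) + (1/4 : ℝ) * (Rap R b b c c) + (1/4 : ℝ) * (Rap R b c b c) + (-1/4 : ℝ) * (Rap R b d a c) + (-1/4 : ℝ) * (Rap R c a d b) + (1/4 : ℝ) * (Rap R c b c b) + (1/4 : ℝ) * (Rap R c c b b) + (-1/4 : ℝ) * (Rap R c d a b) + (1/4 : ℝ) * (Rap R d a d a) + (-1/4 : ℝ) * (Rap R d b c a) + (-1/4 : ℝ) * (Rap R d c b a) + (1/4 : ℝ) * (Rap R d d a a) := by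
    show Rsec R ((1/2 : ℝ) • ((outer a d + outer d a) - (outer b c + outer c b))) ((1/2 : ℝ) • ((outer a d + outer d a) - (outer b c + outer c b))) = _
    simp only [Rsec_smul_left, Rsec_smul_right, Rsec_add_left, Rsec_add_right, Rsec_sub_left, Rsec_sub_right, Rsec_outer]
    ring
  have e2 : Rsec R (Gt a b c d 2) (Gt a b c d 2) = (1/4 : ℝ) * (Rap R a a c c) + (-1/4 : ℝ) * (Rap R a b d c) + (1/4 : ℝ) * (Rap R a c a c) + (-1/4 : ℝ) * (Rap R a d b c) + (-1/4 : ℝ) * (Rap R b a c d) + (1/4 : ℝ) * (Rap R b b d d) + (-1/4 : ℝ) * (Rap R b c a d) + (1/4 : ℝ) * (Rap R b d b d) + (1/4 : ℝ) * (Rap R c a c a) + (-1/4 : ℝ) * (Rap R c b d a) + (1/4 : ℝ) * (Rap R c c a a) + (-1/4 : ℝ) * (Rap R c d b a) + (-1/4 : ℝ) * (Rap R d a c b) + (1/4 : ℝ) * (Rap R d b d b) + (-1/4 : ℝ) * (Rap R d c a b) + (1/4 : ℝ) * (Rap R d d b b) := by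
    show Rsec R ((1/2 : ℝ) • ((outer a c + outer c a) - (outer b d + outer d b))) ((1/2 : ℝ) • ((outer a c + outer c a) - (outer b d + outer d b))) = _
    simp only [Rsec_smul_left, Rsec_smul_right, Rsec_add_left, Rsec_add_right, Rsec_sub_left, Rsec_sub_right, Rsec_outer]
    ring
  have e3 : Rsec R (Gt a b c d 3) (Gt a b c d 3) = (1/4 : ℝ) * (Rap R a a d d) + (1/4 : ℝ) * (Rap R a b c d) + (1/4 : ℝ) * (Rap R a c b d) + (1/4 : ℝ) * (Rap R a d a d) + (1/4 : ℝ) * (Rap R b a d c) + (1/4 : ℝ) * (Rap R b b c c) + (1/4 : ℝ) * (Rap R b c b c) + (1/4 : ℝ) * (Rap R b d a c) + (1/4 : ℝ) * (Rap R c a d b) + (1/4 : ℝ) * (Rap R c b c b) + (1/4 : ℝ) * (Rap R c c b b) + (1/4 : ℝ) * (Rap R c d a b) + (1/4 : ℝ) * (Rap R d a d a) + (1/4 : ℝ) * (Rap R d b c a) + (1/4 : ℝ) * (Rap R d c b a) + (1/4 : ℝ) * (Rap R d d a a) := by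
    show Rsec R ((1/2 : ℝ) • ((outer a d + outer d a) + (outer b c + outer c b))) ((1/2 : ℝ) • ((outer a d + outer d a) + (outer b c + outer c b))) = _
    simp only [Rsec_smul_left, Rsec_smul_right, Rsec_add_left, Rsec_add_right, Rsec_sub_left, Rsec_sub_right, Rsec_outer]
    ring
  have e4 : Rsec R (Gt a b c d 4) (Gt a b c d 4) = (1/4 : ℝ) * (Rap R a a a a) + (1/4 : ℝ) * (Rap R a b b a) + (-1/4 : ℝ) * (Rap R a c c a) + (-1/4 : ℝ) * (Rap R a d d a) + (1/4 : ℝ) * (Rap R b a a b) + (1/4 : ℝ) * (Rap R b b b b) + (-1/4 : ℝ) * (Rap R b c c b) + (-1/4 : ℝ) * (Rap R b d d b) + (-1/4 : ℝ) * (Rap R c a a c) + (-1/4 : ℝ) * (Rap R c b b c) + (1/4 : ℝ) * (Rap R c c c c) + (1/4 : ℝ) * (Rap R c d d c) + (-1/4 : ℝ) * (Rap R d a a d) + (-1/4 : ℝ) * (Rap R d b b d) + (1/4 : ℝ) * (Rap R d c c d) + (1/4 : ℝ) * (Rap R d d d d) := by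
    show Rsec R ((1/2 : ℝ) • ((outer a a + outer b b) - (outer c c + outer d d))) ((1/2 : ℝ) • ((outer a a + outer b b) - (outer c c + outer d d))) = _
    simp only [Rsec_smul_left, Rsec_smul_right, Rsec_add_left, Rsec_add_right, Rsec_sub_left, Rsec_sub_right, Rsec_outer]
    ring
  have e5 : Rsec R (Gt a b c d 5) (Gt a b c d 5) = (1/4 : ℝ) * (Rap R a a b b) + (1/4 : ℝ) * (Rap R a b a b) + (1/4 : ℝ) * (Rap R a c d b) + (1/4 : ℝ) * (Rap R a d c b) + (1/4 : ℝ) * (Rap R b a b a) + (1/4 : ℝ) * (Rap R b b a a) + (1/4 : ℝ) * (Rap R b c d a) + (1/4 : ℝ) * (Rap R b d c a) + (1/4 : ℝ) * (Rap R c a b d) + (1/4 : ℝ) * (Rap R c b a d) + (1/4 : ℝ) * (Rap R c c d d) + (1/4 : ℝ) * (Rap R c d c d) + (1/4 : ℝ) * (Rap R d a b c) + (1/4 : ℝ) * (Rap R d b a c) + (1/4 : ℝ) * (Rap R d c d c) + (1/4 : ℝ) * (Rap R d d c c) := by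
    show Rsec R ((1/2 : ℝ) • ((outer a b + outer b a) + (outer c d + outer d c))) ((1/2 : ℝ) • ((outer a b + outer b a) + (outer c d + outer d c))) = _
    simp only [Rsec_smul_left, Rsec_smul_right, Rsec_add_left, Rsec_add_right, Rsec_sub_left, Rsec_sub_right, Rsec_outer]
    ring
  have e6 : Rsec R (Gt a b c d 6) (Gt a b c d 6) = (1/4 : ℝ) * (Rap R a a b b) + (1/4 : ℝ) * (Rap R a b a b) + (-1/4 : ℝ) * (Rap R a c d b) + (-1/4 : ℝ) * (Rap R a d c b) + (1/4 : ℝ) * (Rap R b a b a) + (1/4 : ℝ) * (Rap R b b a a) + (-1/4 : ℝ) * (Rap R b c d a) + (-1/4 : ℝ) * (Rap R b d c a) + (-1/4 : ℝ) * (Rap R c a b d) + (-1/4 : ℝ) * (Rap R c b a d) + (1/4 : ℝ) * (Rap R c c d d) + (1/4 : ℝ) * (Rap R c d c d) + (-1/4 : ℝ) * (Rap R d a b c) + (-1/4 : ℝ) * (Rap R d b a c) + (1/4 : ℝ) * (Rap R d c d c) + (1/4 : ℝ) * (Rap R d d c c) := by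
    show Rsec R ((1/2 : ℝ) • ((outer a b + outer b a) - (outer c d + outer d c))) ((1/2 : ℝ) • ((outer a b + outer b a) - (outer c d + outer d c))) = _
    simp only [Rsec_smul_left, Rsec_smul_right, Rsec_add_left, Rsec_add_right, Rsec_sub_left, Rsec_sub_right, Rsec_outer]
    ring
  rw [e0, e1, e2, e3, e4, e5, e6]
  clear e0 e1 e2 e3 e4 e5 e6
  have hat1 : Rap R a a a a = 0 := by linear_combination (1/2 : ℝ) * (Rap_swap12 hR a a a a)
  have hat2 : Rap R a a b b = 0 := by linear_combination (1/2 : ℝ) * (Rap_swap12 hR a a b b)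
  have hat3 : Rap R a a c c = 0 := by linear_combination (1/2 : ℝ) * (Rap_swap12 hR a a c c)
  have hat4 : Rap R a a d d = 0 := by linear_combination (1/2 : ℝ) * (Rap_swap12 hR a a d d)
  have hat5 : Rap R a b b a = (-1) * (Rap R a b a b) := by linear_combination (1 : ℝ) * (Rap_swap34 hR a b b a)
  have hat6 : Rap R a b d c = (-1) * (Rap R a b c d) := by linear_combination (1 : ℝ) * (Rap_swap34 hR a b d c)
  have hat7 : Rap R a c c a = (-1) * (Rap R a c a c) := by linear_combination (1 : ℝ) * (Rap_swap34 hR a c c a)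
  have hat8 : Rap R a d b c = (Rap R a c b d - Rap R a b c d) := by linear_combination (1 : ℝ) * (Rap_bianchi hR a b c d) + (-1 : ℝ) * (Rap_swap34 hR a c d b)
  have hat9 : Rap R a d d a = (-1) * (Rap R a d a d) := by linear_combination (1 : ℝ) * (Rap_swap34 hR a d d a)
  have hat10 : Rap R b a a b = (-1) * (Rap R a b a b) := by linear_combination (1 : ℝ) * (Rap_swap12 hR b a a b)
  have hat11 : Rap R b a b a = Rap R a b a b := by linear_combination (1 : ℝ) * (Rap_swap12 hR b a b a) + (-1 : ℝ) * (Rap_swap34 hR a b b a)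
  have hat12 : Rap R b a c d = (-1) * (Rap R a b c d) := by linear_combination (1 : ℝ) * (Rap_swap12 hR b a c d)
  have hat13 : Rap R b a d c = Rap R a b c d := by linear_combination (1 : ℝ) * (Rap_swap12 hR b a d c) + (-1 : ℝ) * (Rap_swap34 hR a b d c)
  have hat14 : Rap R b b a a = 0 := by linear_combination (1/2 : ℝ) * (Rap_swap12 hR b b a a)
  have hat15 : Rap R b b b b = 0 := by linear_combination (1/2 : ℝ) * (Rap_swap12 hR b b b b)
  have hat16 : Rap R b b c c = 0 := by linear_combination (1/2 : ℝ) * (Rap_swap12 hR b b c c)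
  have hat17 : Rap R b b d d = 0 := by linear_combination (1/2 : ℝ) * (Rap_swap12 hR b b d d)
  have hat18 : Rap R b c a d = (Rap R a c b d - Rap R a b c d) := by linear_combination (1 : ℝ) * (Rap_pair hR b c a d) + (1 : ℝ) * (Rap_bianchi hR a b c d) + (-1 : ℝ) * (Rap_swap34 hR a c d b)
  have hat19 : Rap R b c c b = (-1) * (Rap R b c b c) := by linear_combination (1 : ℝ) * (Rap_swap34 hR b c c b)
  have hat20 : Rap R b d a c = Rap R a c b d := by linear_combination (1 : ℝ) * (Rap_pair hR b d a c)
  have hat21 : Rap R b d d b = (-1) * (Rap R b d b d) := by linear_combination (1 : ℝ) * (Rap_swap34 hR b d d b)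
  have hat22 : Rap R c a a c = (-1) * (Rap R a c a c) := by linear_combination (1 : ℝ) * (Rap_swap12 hR c a a c)
  have hat23 : Rap R c a c a = Rap R a c a c := by linear_combination (1 : ℝ) * (Rap_swap12 hR c a c a) + (-1 : ℝ) * (Rap_swap34 hR a c c a)
  have hat24 : Rap R c a d b = Rap R a c b d := by linear_combination (1 : ℝ) * (Rap_swap12 hR c a d b) + (-1 : ℝ) * (Rap_swap34 hR a c d b)
  have hat25 : Rap R c b b c = (-1) * (Rap R b c b c) := by linear_combination (1 : ℝ) * (Rap_swap12 hR c b b c)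
  have hat26 : Rap R c b c b = Rap R b c b c := by linear_combination (1 : ℝ) * (Rap_swap12 hR c b c b) + (-1 : ℝ) * (Rap_swap34 hR b c c b)
  have hat27 : Rap R c b d a = (Rap R a c b d - Rap R a b c d) := by linear_combination (1 : ℝ) * (Rap_swap12 hR c b d a) + (-1 : ℝ) * (Rap_swap34 hR b c d a) + (1 : ℝ) * (Rap_pair hR b c a d) + (1 : ℝ) * (Rap_bianchi hR a b c d) + (-1 : ℝ) * (Rap_swap34 hR a c d b)
  have hat28 : Rap R c c a a = 0 := by linear_combination (1/2 : ℝ) * (Rap_swap12 hR c c a a)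
  have hat29 : Rap R c c b b = 0 := by linear_combination (1/2 : ℝ) * (Rap_swap12 hR c c b b)
  have hat30 : Rap R c c c c = 0 := by linear_combination (1/2 : ℝ) * (Rap_swap12 hR c c c c)
  have hat31 : Rap R c c d d = 0 := by linear_combination (1/2 : ℝ) * (Rap_swap12 hR c c d d)
  have hat32 : Rap R c d a b = Rap R a b c d := by linear_combination (1 : ℝ) * (Rap_pair hR c d a b)
  have hat33 : Rap R c d b a = (-1) * (Rap R a b c d) := by linear_combination (1 : ℝ) * (Rap_swap34 hR c d b a) + (-1 : ℝ) * (Rap_pair hR c d a b)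
  have hat34 : Rap R c d d c = (-1) * (Rap R c d c d) := by linear_combination (1 : ℝ) * (Rap_swap34 hR c d d c)
  have hat35 : Rap R d a a d = (-1) * (Rap R a d a d) := by linear_combination (1 : ℝ) * (Rap_swap12 hR d a a d)
  have hat36 : Rap R d a c b = (Rap R a c b d - Rap R a b c d) := by linear_combination (1 : ℝ) * (Rap_swap12 hR d a c b) + (-1 : ℝ) * (Rap_swap34 hR a d c b) + (1 : ℝ) * (Rap_bianchi hR a b c d) + (-1 : ℝ) * (Rap_swap34 hR a c d b)
  have hat37 : Rap R d a d a = Rap R a d a d := by linear_combination (1 : ℝ) * (Rap_swap12 hR d a d a) + (-1 : ℝ) * (Rap_swap34 hR a d d a)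
  have hat38 : Rap R d b b d = (-1) * (Rap R b d b d) := by linear_combination (1 : ℝ) * (Rap_swap12 hR d b b d)
  have hat39 : Rap R d b c a = Rap R a c b d := by linear_combination (1 : ℝ) * (Rap_swap12 hR d b c a) + (-1 : ℝ) * (Rap_swap34 hR b d c a) + (1 : ℝ) * (Rap_pair hR b d a c)
  have hat40 : Rap R d b d b = Rap R b d b d := by linear_combination (1 : ℝ) * (Rap_swap12 hR d b d b) + (-1 : ℝ) * (Rap_swap34 hR b d d b)
  have hat41 : Rap R d c a b = (-1) * (Rap R a b c d) := by linear_combination (1 : ℝ) * (Rap_swap12 hR d c a b) + (-1 : ℝ) * (Rap_pair hR c d a b)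
  have hat42 : Rap R d c b a = Rap R a b c d := by linear_combination (1 : ℝ) * (Rap_swap12 hR d c b a) + (-1 : ℝ) * (Rap_swap34 hR c d b a) + (1 : ℝ) * (Rap_pair hR c d a b)
  have hat43 : Rap R d c c d = (-1) * (Rap R c d c d) := by linear_combination (1 : ℝ) * (Rap_swap12 hR d c c d)
  have hat44 : Rap R d c d c = Rap R c d c d := by linear_combination (1 : ℝ) * (Rap_swap12 hR d c d c) + (-1 : ℝ) * (Rap_swap34 hR c d d c)
  have hat45 : Rap R d d a a = 0 := by linear_combination (1/2 : ℝ) * (Rap_swap12 hR d d a a)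
  have hat46 : Rap R d d b b = 0 := by linear_combination (1/2 : ℝ) * (Rap_swap12 hR d d b b)
  have hat47 : Rap R d d c c = 0 := by linear_combination (1/2 : ℝ) * (Rap_swap12 hR d d c c)
  have hat48 : Rap R d d d d = 0 := by linear_combination (1/2 : ℝ) * (Rap_swap12 hR d d d d)
  linear_combination (-2/9 : ℝ) * hat1 + (-2/9 : ℝ) * hat2 + (-5/18 : ℝ) * hat3 + (-5/18 : ℝ) * hat4 + (-2/9 : ℝ) * hat5 + (-1/6 : ℝ) * hat6 + (2/9 : ℝ) * hat7 + (-1/6 : ℝ) * hat8 + (2/9 : ℝ) * hat9 + (-2/9 : ℝ) * hat10 + (-2/9 : ℝ) * hat11 + (-1/6 : ℝ) * hat12 + (1/6 : ℝ) * hat13 + (-2/9 : ℝ) * hat14 + (-2/9 : ℝ) * hat15 + (-5/18 : ℝ) * hat16 + (-5/18 : ℝ) * hat17 + (-1/6 : ℝ) * hat18 + (2/9 : ℝ) * hat19 + (1/6 : ℝ) * hat20 + (2/9 : ℝ) * hat21 + (2/9 : ℝ) * hat22 + (-5/18 : ℝ) * hat23 + (1/6 : ℝ) * hat24 + (2/9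 : ℝ) * hat25 + (-5/18 : ℝ) * hat26 + (-1/6 : ℝ) * hat27 + (-5/18 : ℝ) * hat28 + (-5/18 : ℝ) * hat29 + (-2/9 : ℝ) * hat30 + (-2/9 : ℝ) * hat31 + (1/6 : ℝ) * hat32 + (-1/6 : ℝ) * hat33 + (-2/9 : ℝ) * hat34 + (2/9 : ℝ) * hat35 + (-1/6 : ℝ) * hat36 + (-5/18 : ℝ) * hat37 + (2/9 : ℝ) * hat38 + (1/6 : ℝ) * hat39 + (-5/18 : ℝ) * hat40 + (-1/6 : ℝ) * hat41 + (1/6 : ℝ) * hat42 + (-2/9 : ℝ) * hat43 + (-2/9 : ℝ) * hat44 + (-5/18 : ℝ) * hat45 + (-5/18 : ℝ) * hat46 + (-2/9 : ℝ) * hat47 + (-2/9 : ℝ) * hat48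


lemma Gt_isSymm (a b c d : Fin n → ℝ) : ∀ i, (Gt a b c d i).IsSymm := by
  intro i; fin_cases i <;>
  · refine Matrix.IsSymm.ext fun p q => ?_
    show ((1/2 : ℝ) • _ : Matrix (Fin n) (Fin n) ℝ) q p = ((1/2 : ℝ) • _ : Matrix (Fin n) (Fin n) ℝ) p q
    simp [outer, Matrix.smul_apply, Matrix.add_apply, Matrix.sub_apply]; ring

lemma Gt_trace (v : Fin 4 → Fin n → ℝ) (hv : OrthonormalFam v) :
    ∀ i, (Gt (v 0) (v 1) (v 2) (v 3) i).trace = 0 := by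
  have hv' : ∀ a b, (∑ k, v a k * v b k) = if a = b then (1 : ℝ) else 0 := hv
  intro i
  fin_cases i
  · show Matrix.trace ((1/2 : ℝ) • ((outer (v 0) (v 2) + outer (v 2) (v 0)) + (outer (v 1) (v 3) + outer (v 3) (v 1)))) = 0
    simp only [Matrix.trace_smul, Matrix.trace_add, Matrix.trace_sub, trace_outer, hv']
    simp
    try norm_num
  · show Matrix.trace ((1/2 : ℝ) • ((outer (v 0) (v 3) + outer (v 3) (v 0)) - (outer (v 1) (v 2) + outer (v 2) (v 1)))) = 0
    simp only [Matrix.trace_smul, Matrix.trace_add, Matrix.trace_sub, trace_outer, hv']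
    simp
    try norm_num
  · show Matrix.trace ((1/2 : ℝ) • ((outer (v 0) (v 2) + outer (v 2) (v 0)) - (outer (v 1) (v 3) + outer (v 3) (v 1)))) = 0
    simp only [Matrix.trace_smul, Matrix.trace_add, Matrix.trace_sub, trace_outer, hv']
    simp
    try norm_num
  · show Matrix.trace ((1/2 : ℝ) • ((outer (v 0) (v 3) + outer (v 3) (v 0)) + (outer (v 1) (v 2) + outer (v 2) (v 1)))) = 0
    simp only [Matrix.trace_smul, Matrix.trace_add, Matrix.trace_sub, trace_outer, hv']
    simp
    try norm_num
  · show Matrix.trace ((1/2 : ℝ) • ((outer (v 0) (v 0) + outer (v 1) (v 1)) - (outer (v 2) (v 2) + outer (v 3) (v 3)))) = 0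
    simp only [Matrix.trace_smul, Matrix.trace_add, Matrix.trace_sub, trace_outer, hv']
    simp
    try norm_num
  · show Matrix.trace ((1/2 : ℝ) • ((outer (v 0) (v 1) + outer (v 1) (v 0)) + (outer (v 2) (v 3) + outer (v 3) (v 2)))) = 0
    simp only [Matrix.trace_smul, Matrix.trace_add, Matrix.trace_sub, trace_outer, hv']
    simp
    try norm_num
  · show Matrix.trace ((1/2 : ℝ) • ((outer (v 0) (v 1) + outer (v 1) (v 0)) - (outer (v 2) (v 3) + outer (v 3) (v 2)))) = 0
    simp only [Matrix.trace_smul, Matrix.trace_add, Matrix.trace_sub, trace_outer, hv']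
    simp
    try norm_num


set_option maxHeartbeats 2000000 in
lemma Gt_orth (v : Fin 4 → Fin n → ℝ) (hv : OrthonormalFam v) :
    ∀ i j, minner (Gt (v 0) (v 1) (v 2) (v 3) i) (Gt (v 0) (v 1) (v 2) (v 3) j)
      = if i = j then 1 else 0 := by
  have hv' : ∀ a b, (∑ k, v a k * v b k) = if a = b then (1 : ℝ) else 0 := hv
  intro i j
  fin_cases i <;> fin_cases j
  · show minner ((1/2 : ℝ) • ((outer (v 0) (v 2) + outer (v 2) (v 0)) + (outer (v 1) (v 3) + outer (v 3) (v 1)))) ((1/2 : ℝ) • ((outer (v 0) (v 2) + outer (v 2) (v 0)) + (outer (v 1) (v 3) + outer (v 3) (v 1)))) = _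
    simp only [minner_smul_left, minner_smul_right, minner_add_left, minner_add_right, minner_sub_left, minner_sub_right, minner_outer, hv']
    simp
    try norm_num
  · show minner ((1/2 : ℝ) • ((outer (v 0) (v 2) + outer (v 2) (v 0)) + (outer (v 1) (v 3) + outer (v 3) (v 1)))) ((1/2 : ℝ) • ((outer (v 0) (v 3) + outer (v 3) (v 0)) - (outer (v 1) (v 2) + outer (v 2) (v 1)))) = _
    simp only [minner_smul_left, minner_smul_right, minner_add_left, minner_add_right, minner_sub_left, minner_sub_right, minner_outer, hv']
    simp
    try norm_num
  · show minner ((1/2 : ℝ) • ((outer (v 0) (v 2) + outer (v 2) (v 0)) + (outer (v 1) (v 3) + outer (v 3) (v 1)))) ((1/2 : ℝ) • ((outer (v 0) (v 2) + outer (v 2) (v 0)) - (outer (v 1) (v 3) + outer (v 3) (v 1)))) = _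
    simp only [minner_smul_left, minner_smul_right, minner_add_left, minner_add_right, minner_sub_left, minner_sub_right, minner_outer, hv']
    simp
    try norm_num
  · show minner ((1/2 : ℝ) • ((outer (v 0) (v 2) + outer (v 2) (v 0)) + (outer (v 1) (v 3) + outer (v 3) (v 1)))) ((1/2 : ℝ) • ((outer (v 0) (v 3) + outer (v 3) (v 0)) + (outer (v 1) (v 2) + outer (v 2) (v 1)))) = _
    simp only [minner_smul_left, minner_smul_right, minner_add_left, minner_add_right, minner_sub_left, minner_sub_right, minner_outer, hv']
    simp
    try norm_num
  · show minner ((1/2 : ℝ) • ((outer (v 0) (v 2) + outer (v 2) (v 0)) + (outer (v 1) (v 3) + outer (v 3) (v 1)))) ((1/2 : ℝ) • ((outer (v 0) (v 0) + outer (v 1) (v 1)) - (outer (v 2) (v 2) + outer (v 3) (v 3)))) = _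
    simp only [minner_smul_left, minner_smul_right, minner_add_left, minner_add_right, minner_sub_left, minner_sub_right, minner_outer, hv']
    simp
    try norm_num
  · show minner ((1/2 : ℝ) • ((outer (v 0) (v 2) + outer (v 2) (v 0)) + (outer (v 1) (v 3) + outer (v 3) (v 1)))) ((1/2 : ℝ) • ((outer (v 0) (v 1) + outer (v 1) (v 0)) + (outer (v 2) (v 3) + outer (v 3) (v 2)))) = _
    simp only [minner_smul_left, minner_smul_right, minner_add_left, minner_add_right, minner_sub_left, minner_sub_right, minner_outer, hv']
    simp
    try norm_num
  · show minner ((1/2 : ℝ) • ((outer (v 0) (v 2) + outer (v 2) (v 0)) + (outer (v 1) (v 3) + outer (v 3) (v 1)))) ((1/2 : ℝ) • ((outer (v 0) (v 1) + outer (v 1) (v 0)) - (outer (v 2) (v 3) + outer (v 3) (v 2)))) = _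
    simp only [minner_smul_left, minner_smul_right, minner_add_left, minner_add_right, minner_sub_left, minner_sub_right, minner_outer, hv']
    simp
    try norm_num
  · show minner ((1/2 : ℝ) • ((outer (v 0) (v 3) + outer (v 3) (v 0)) - (outer (v 1) (v 2) + outer (v 2) (v 1)))) ((1/2 : ℝ) • ((outer (v 0) (v 2) + outer (v 2) (v 0)) + (outer (v 1) (v 3) + outer (v 3) (v 1)))) = _
    simp only [minner_smul_left, minner_smul_right, minner_add_left, minner_add_right, minner_sub_left, minner_sub_right, minner_outer, hv']
    simp
    try norm_num
  · show minner ((1/2 : ℝ) • ((outer (v 0) (v 3) + outer (v 3) (v 0)) - (outer (v 1) (v 2) + outer (v 2) (v 1)))) ((1/2 : ℝ) • ((outer (v 0) (v 3) + outer (v 3) (v 0)) - (outer (v 1) (v 2) + outer (v 2) (v 1)))) = _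
    simp only [minner_smul_left, minner_smul_right, minner_add_left, minner_add_right, minner_sub_left, minner_sub_right, minner_outer, hv']
    simp
    try norm_num
  · show minner ((1/2 : ℝ) • ((outer (v 0) (v 3) + outer (v 3) (v 0)) - (outer (v 1) (v 2) + outer (v 2) (v 1)))) ((1/2 : ℝ) • ((outer (v 0) (v 2) + outer (v 2) (v 0)) - (outer (v 1) (v 3) + outer (v 3) (v 1)))) = _
    simp only [minner_smul_left, minner_smul_right, minner_add_left, minner_add_right, minner_sub_left, minner_sub_right, minner_outer, hv']
    simp
    try norm_num
  · show minner ((1/2 : ℝ) • ((outer (v 0) (v 3) + outer (v 3) (v 0)) - (outer (v 1) (v 2) + outer (v 2) (v 1)))) ((1/2 : ℝ) • ((outer (v 0) (v 3) + outer (v 3) (v 0)) + (outer (v 1) (v 2) + outer (v 2) (v 1)))) = _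
    simp only [minner_smul_left, minner_smul_right, minner_add_left, minner_add_right, minner_sub_left, minner_sub_right, minner_outer, hv']
    simp
    try norm_num
  · show minner ((1/2 : ℝ) • ((outer (v 0) (v 3) + outer (v 3) (v 0)) - (outer (v 1) (v 2) + outer (v 2) (v 1)))) ((1/2 : ℝ) • ((outer (v 0) (v 0) + outer (v 1) (v 1)) - (outer (v 2) (v 2) + outer (v 3) (v 3)))) = _
    simp only [minner_smul_left, minner_smul_right, minner_add_left, minner_add_right, minner_sub_left, minner_sub_right, minner_outer, hv']
    simp
    try norm_num
  · show minner ((1/2 : ℝ) • ((outer (v 0) (v 3) + outer (v 3) (v 0)) - (outer (v 1) (v 2) + outer (v 2) (v 1)))) ((1/2 : ℝ) • ((outer (v 0) (v 1) + outer (v 1) (v 0)) + (outer (v 2) (v 3) + outer (v 3) (v 2)))) = _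
    simp only [minner_smul_left, minner_smul_right, minner_add_left, minner_add_right, minner_sub_left, minner_sub_right, minner_outer, hv']
    simp
    try norm_num
  · show minner ((1/2 : ℝ) • ((outer (v 0) (v 3) + outer (v 3) (v 0)) - (outer (v 1) (v 2) + outer (v 2) (v 1)))) ((1/2 : ℝ) • ((outer (v 0) (v 1) + outer (v 1) (v 0)) - (outer (v 2) (v 3) + outer (v 3) (v 2)))) = _
    simp only [minner_smul_left, minner_smul_right, minner_add_left, minner_add_right, minner_sub_left, minner_sub_right, minner_outer, hv']
    simp
    try norm_num
  · show minner ((1/2 : ℝ) • ((outer (v 0) (v 2) + outer (v 2) (v 0)) - (outer (v 1) (v 3) + outer (v 3) (v 1)))) ((1/2 : ℝ) • ((outer (v 0) (v 2) + outer (v 2) (v 0)) + (outer (v 1) (v 3) + outer (v 3) (v 1)))) = _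
    simp only [minner_smul_left, minner_smul_right, minner_add_left, minner_add_right, minner_sub_left, minner_sub_right, minner_outer, hv']
    simp
    try norm_num
  · show minner ((1/2 : ℝ) • ((outer (v 0) (v 2) + outer (v 2) (v 0)) - (outer (v 1) (v 3) + outer (v 3) (v 1)))) ((1/2 : ℝ) • ((outer (v 0) (v 3) + outer (v 3) (v 0)) - (outer (v 1) (v 2) + outer (v 2) (v 1)))) = _
    simp only [minner_smul_left, minner_smul_right, minner_add_left, minner_add_right, minner_sub_left, minner_sub_right, minner_outer, hv']
    simp
    try norm_num
  · show minner ((1/2 : ℝ) • ((outer (v 0) (v 2) + outer (v 2) (v 0)) - (outer (v 1) (v 3) + outer (v 3) (v 1)))) ((1/2 : ℝ) • ((outer (v 0) (v 2) + outer (v 2) (v 0)) - (outer (v 1) (v 3) + outer (v 3) (v 1)))) = _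
    simp only [minner_smul_left, minner_smul_right, minner_add_left, minner_add_right, minner_sub_left, minner_sub_right, minner_outer, hv']
    simp
    try norm_num
  · show minner ((1/2 : ℝ) • ((outer (v 0) (v 2) + outer (v 2) (v 0)) - (outer (v 1) (v 3) + outer (v 3) (v 1)))) ((1/2 : ℝ) • ((outer (v 0) (v 3) + outer (v 3) (v 0)) + (outer (v 1) (v 2) + outer (v 2) (v 1)))) = _
    simp only [minner_smul_left, minner_smul_right, minner_add_left, minner_add_right, minner_sub_left, minner_sub_right, minner_outer, hv']
    simp
    try norm_num
  · show minner ((1/2 : ℝ) • ((outer (v 0) (v 2) + outer (v 2) (v 0)) - (outer (v 1) (v 3) + outer (v 3) (v 1)))) ((1/2 : ℝ) • ((outer (v 0) (v 0) + outer (v 1) (v 1)) - (outer (v 2) (v 2) + outer (v 3) (v 3)))) = _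
    simp only [minner_smul_left, minner_smul_right, minner_add_left, minner_add_right, minner_sub_left, minner_sub_right, minner_outer, hv']
    simp
    try norm_num
  · show minner ((1/2 : ℝ) • ((outer (v 0) (v 2) + outer (v 2) (v 0)) - (outer (v 1) (v 3) + outer (v 3) (v 1)))) ((1/2 : ℝ) • ((outer (v 0) (v 1) + outer (v 1) (v 0)) + (outer (v 2) (v 3) + outer (v 3) (v 2)))) = _
    simp only [minner_smul_left, minner_smul_right, minner_add_left, minner_add_right, minner_sub_left, minner_sub_right, minner_outer, hv']
    simp
    try norm_num
  · show minner ((1/2 : ℝ) • ((outer (v 0) (v 2) + outer (v 2) (v 0)) - (outer (v 1) (v 3) + outer (v 3) (v 1)))) ((1/2 : ℝ) • ((outer (v 0) (v 1) + outer (v 1) (v 0)) - (outer (v 2) (v 3) + outer (v 3) (v 2)))) = _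
    simp only [minner_smul_left, minner_smul_right, minner_add_left, minner_add_right, minner_sub_left, minner_sub_right, minner_outer, hv']
    simp
    try norm_num
  · show minner ((1/2 : ℝ) • ((outer (v 0) (v 3) + outer (v 3) (v 0)) + (outer (v 1) (v 2) + outer (v 2) (v 1)))) ((1/2 : ℝ) • ((outer (v 0) (v 2) + outer (v 2) (v 0)) + (outer (v 1) (v 3) + outer (v 3) (v 1)))) = _
    simp only [minner_smul_left, minner_smul_right, minner_add_left, minner_add_right, minner_sub_left, minner_sub_right, minner_outer, hv']
    simp
    try norm_num
  · show minner ((1/2 : ℝ) • ((outer (v 0) (v 3) + outer (v 3) (v 0)) + (outer (v 1) (v 2) + outer (v 2) (v 1)))) ((1/2 : ℝ) • ((outer (v 0) (v 3) + outer (v 3) (v 0)) - (outer (v 1) (v 2) + outer (v 2) (v 1)))) = _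
    simp only [minner_smul_left, minner_smul_right, minner_add_left, minner_add_right, minner_sub_left, minner_sub_right, minner_outer, hv']
    simp
    try norm_num
  · show minner ((1/2 : ℝ) • ((outer (v 0) (v 3) + outer (v 3) (v 0)) + (outer (v 1) (v 2) + outer (v 2) (v 1)))) ((1/2 : ℝ) • ((outer (v 0) (v 2) + outer (v 2) (v 0)) - (outer (v 1) (v 3) + outer (v 3) (v 1)))) = _
    simp only [minner_smul_left, minner_smul_right, minner_add_left, minner_add_right, minner_sub_left, minner_sub_right, minner_outer, hv']
    simp
    try norm_num
  · show minner ((1/2 : ℝ) • ((outer (v 0) (v 3) + outer (v 3) (v 0)) + (outer (v 1) (v 2) + outer (v 2) (v 1)))) ((1/2 : ℝ) • ((outer (v 0) (v 3) + outer (v 3) (v 0)) + (outer (v 1) (v 2) + outer (v 2) (v 1)))) = _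
    simp only [minner_smul_left, minner_smul_right, minner_add_left, minner_add_right, minner_sub_left, minner_sub_right, minner_outer, hv']
    simp
    try norm_num
  · show minner ((1/2 : ℝ) • ((outer (v 0) (v 3) + outer (v 3) (v 0)) + (outer (v 1) (v 2) + outer (v 2) (v 1)))) ((1/2 : ℝ) • ((outer (v 0) (v 0) + outer (v 1) (v 1)) - (outer (v 2) (v 2) + outer (v 3) (v 3)))) = _
    simp only [minner_smul_left, minner_smul_right, minner_add_left, minner_add_right, minner_sub_left, minner_sub_right, minner_outer, hv']
    simp
    try norm_num
  · show minner ((1/2 : ℝ) • ((outer (v 0) (v 3) + outer (v 3) (v 0)) + (outer (v 1) (v 2) + outer (v 2) (v 1)))) ((1/2 : ℝ) • ((outer (v 0) (v 1) + outer (v 1) (v 0)) + (outer (v 2) (v 3) + outer (v 3) (v 2)))) = _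
    simp only [minner_smul_left, minner_smul_right, minner_add_left, minner_add_right, minner_sub_left, minner_sub_right, minner_outer, hv']
    simp
    try norm_num
  · show minner ((1/2 : ℝ) • ((outer (v 0) (v 3) + outer (v 3) (v 0)) + (outer (v 1) (v 2) + outer (v 2) (v 1)))) ((1/2 : ℝ) • ((outer (v 0) (v 1) + outer (v 1) (v 0)) - (outer (v 2) (v 3) + outer (v 3) (v 2)))) = _
    simp only [minner_smul_left, minner_smul_right, minner_add_left, minner_add_right, minner_sub_left, minner_sub_right, minner_outer, hv']
    simp
    try norm_num
  · show minner ((1/2 : ℝ) • ((outer (v 0) (v 0) + outer (v 1) (v 1)) - (outer (v 2) (v 2) + outer (v 3) (v 3)))) ((1/2 : ℝ) • ((outer (v 0) (v 2) + outer (v 2) (v 0)) + (outer (v 1) (v 3) + outer (v 3) (v 1)))) = _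
    simp only [minner_smul_left, minner_smul_right, minner_add_left, minner_add_right, minner_sub_left, minner_sub_right, minner_outer, hv']
    simp
    try norm_num
  · show minner ((1/2 : ℝ) • ((outer (v 0) (v 0) + outer (v 1) (v 1)) - (outer (v 2) (v 2) + outer (v 3) (v 3)))) ((1/2 : ℝ) • ((outer (v 0) (v 3) + outer (v 3) (v 0)) - (outer (v 1) (v 2) + outer (v 2) (v 1)))) = _
    simp only [minner_smul_left, minner_smul_right, minner_add_left, minner_add_right, minner_sub_left, minner_sub_right, minner_outer, hv']
    simp
    try norm_num
  · show minner ((1/2 : ℝ) • ((outer (v 0) (v 0) + outer (v 1) (v 1)) - (outer (v 2) (v 2) + outer (v 3) (v 3)))) ((1/2 : ℝ) • ((outer (v 0) (v 2) + outer (v 2) (v 0)) - (outer (v 1) (v 3) + outer (v 3) (v 1)))) = _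
    simp only [minner_smul_left, minner_smul_right, minner_add_left, minner_add_right, minner_sub_left, minner_sub_right, minner_outer, hv']
    simp
    try norm_num
  · show minner ((1/2 : ℝ) • ((outer (v 0) (v 0) + outer (v 1) (v 1)) - (outer (v 2) (v 2) + outer (v 3) (v 3)))) ((1/2 : ℝ) • ((outer (v 0) (v 3) + outer (v 3) (v 0)) + (outer (v 1) (v 2) + outer (v 2) (v 1)))) = _
    simp only [minner_smul_left, minner_smul_right, minner_add_left, minner_add_right, minner_sub_left, minner_sub_right, minner_outer, hv']
    simp
    try norm_num
  · show minner ((1/2 : ℝ) • ((outer (v 0) (v 0) + outer (v 1) (v 1)) - (outer (v 2) (v 2) + outer (v 3) (v 3)))) ((1/2 : ℝ) • ((outer (v 0) (v 0) + outer (v 1) (v 1)) - (outer (v 2) (v 2) + outer (v 3) (v 3)))) = _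
    simp only [minner_smul_left, minner_smul_right, minner_add_left, minner_add_right, minner_sub_left, minner_sub_right, minner_outer, hv']
    simp
    try norm_num
  · show minner ((1/2 : ℝ) • ((outer (v 0) (v 0) + outer (v 1) (v 1)) - (outer (v 2) (v 2) + outer (v 3) (v 3)))) ((1/2 : ℝ) • ((outer (v 0) (v 1) + outer (v 1) (v 0)) + (outer (v 2) (v 3) + outer (v 3) (v 2)))) = _
    simp only [minner_smul_left, minner_smul_right, minner_add_left, minner_add_right, minner_sub_left, minner_sub_right, minner_outer, hv']
    simp
    try norm_num
  · show minner ((1/2 : ℝ) • ((outer (v 0) (v 0) + outer (v 1) (v 1)) - (outer (v 2) (v 2) + outer (v 3) (v 3)))) ((1/2 : ℝ) • ((outer (v 0) (v 1) + outer (v 1) (v 0)) - (outer (v 2) (v 3) + outer (v 3) (v 2)))) = _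
    simp only [minner_smul_left, minner_smul_right, minner_add_left, minner_add_right, minner_sub_left, minner_sub_right, minner_outer, hv']
    simp
    try norm_num
  · show minner ((1/2 : ℝ) • ((outer (v 0) (v 1) + outer (v 1) (v 0)) + (outer (v 2) (v 3) + outer (v 3) (v 2)))) ((1/2 : ℝ) • ((outer (v 0) (v 2) + outer (v 2) (v 0)) + (outer (v 1) (v 3) + outer (v 3) (v 1)))) = _
    simp only [minner_smul_left, minner_smul_right, minner_add_left, minner_add_right, minner_sub_left, minner_sub_right, minner_outer, hv']
    simp
    try norm_num
  · show minner ((1/2 : ℝ) • ((outer (v 0) (v 1) + outer (v 1) (v 0)) + (outer (v 2) (v 3) + outer (v 3) (v 2)))) ((1/2 : ℝ) • ((outer (v 0) (v 3) + outer (v 3) (v 0)) - (outer (v 1) (v 2) + outer (v 2) (v 1)))) = _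
    simp only [minner_smul_left, minner_smul_right, minner_add_left, minner_add_right, minner_sub_left, minner_sub_right, minner_outer, hv']
    simp
    try norm_num
  · show minner ((1/2 : ℝ) • ((outer (v 0) (v 1) + outer (v 1) (v 0)) + (outer (v 2) (v 3) + outer (v 3) (v 2)))) ((1/2 : ℝ) • ((outer (v 0) (v 2) + outer (v 2) (v 0)) - (outer (v 1) (v 3) + outer (v 3) (v 1)))) = _
    simp only [minner_smul_left, minner_smul_right, minner_add_left, minner_add_right, minner_sub_left, minner_sub_right, minner_outer, hv']
    simp
    try norm_num
  · show minner ((1/2 : ℝ) • ((outer (v 0) (v 1) + outer (v 1) (v 0)) + (outer (v 2) (v 3) + outer (v 3) (v 2)))) ((1/2 : ℝ) • ((outer (v 0) (v 3) + outer (v 3) (v 0)) + (outer (v 1) (v 2) + outer (v 2) (v 1)))) = _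
    simp only [minner_smul_left, minner_smul_right, minner_add_left, minner_add_right, minner_sub_left, minner_sub_right, minner_outer, hv']
    simp
    try norm_num
  · show minner ((1/2 : ℝ) • ((outer (v 0) (v 1) + outer (v 1) (v 0)) + (outer (v 2) (v 3) + outer (v 3) (v 2)))) ((1/2 : ℝ) • ((outer (v 0) (v 0) + outer (v 1) (v 1)) - (outer (v 2) (v 2) + outer (v 3) (v 3)))) = _
    simp only [minner_smul_left, minner_smul_right, minner_add_left, minner_add_right, minner_sub_left, minner_sub_right, minner_outer, hv']
    simp
    try norm_num
  · show minner ((1/2 : ℝ) • ((outer (v 0) (v 1) + outer (v 1) (v 0)) + (outer (v 2) (v 3) + outer (v 3) (v 2)))) ((1/2 : ℝ) • ((outer (v 0) (v 1) + outer (v 1) (v 0)) + (outer (v 2) (v 3) + outer (v 3) (v 2)))) = _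
    simp only [minner_smul_left, minner_smul_right, minner_add_left, minner_add_right, minner_sub_left, minner_sub_right, minner_outer, hv']
    simp
    try norm_num
  · show minner ((1/2 : ℝ) • ((outer (v 0) (v 1) + outer (v 1) (v 0)) + (outer (v 2) (v 3) + outer (v 3) (v 2)))) ((1/2 : ℝ) • ((outer (v 0) (v 1) + outer (v 1) (v 0)) - (outer (v 2) (v 3) + outer (v 3) (v 2)))) = _
    simp only [minner_smul_left, minner_smul_right, minner_add_left, minner_add_right, minner_sub_left, minner_sub_right, minner_outer, hv']
    simp
    try norm_num
  · show minner ((1/2 : ℝ) • ((outer (v 0) (v 1) + outer (v 1) (v 0)) - (outer (v 2) (v 3) + outer (v 3) (v 2)))) ((1/2 : ℝ) • ((outer (v 0) (v 2) + outer (v 2) (v 0)) + (outer (v 1) (v 3) + outer (v 3) (v 1)))) = _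
    simp only [minner_smul_left, minner_smul_right, minner_add_left, minner_add_right, minner_sub_left, minner_sub_right, minner_outer, hv']
    simp
    try norm_num
  · show minner ((1/2 : ℝ) • ((outer (v 0) (v 1) + outer (v 1) (v 0)) - (outer (v 2) (v 3) + outer (v 3) (v 2)))) ((1/2 : ℝ) • ((outer (v 0) (v 3) + outer (v 3) (v 0)) - (outer (v 1) (v 2) + outer (v 2) (v 1)))) = _
    simp only [minner_smul_left, minner_smul_right, minner_add_left, minner_add_right, minner_sub_left, minner_sub_right, minner_outer, hv']
    simp
    try norm_num
  · show minner ((1/2 : ℝ) • ((outer (v 0) (v 1) + outer (v 1) (v 0)) - (outer (v 2) (v 3) + outer (v 3) (v 2)))) ((1/2 : ℝ) • ((outer (v 0) (v 2) + outer (v 2) (v 0)) - (outer (v 1) (v 3) + outer (v 3) (v 1)))) = _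
    simp only [minner_smul_left, minner_smul_right, minner_add_left, minner_add_right, minner_sub_left, minner_sub_right, minner_outer, hv']
    simp
    try norm_num
  · show minner ((1/2 : ℝ) • ((outer (v 0) (v 1) + outer (v 1) (v 0)) - (outer (v 2) (v 3) + outer (v 3) (v 2)))) ((1/2 : ℝ) • ((outer (v 0) (v 3) + outer (v 3) (v 0)) + (outer (v 1) (v 2) + outer (v 2) (v 1)))) = _
    simp only [minner_smul_left, minner_smul_right, minner_add_left, minner_add_right, minner_sub_left, minner_sub_right, minner_outer, hv']
    simp
    try norm_num
  · show minner ((1/2 : ℝ) • ((outer (v 0) (v 1) + outer (v 1) (v 0)) - (outer (v 2) (v 3) + outer (v 3) (v 2)))) ((1/2 : ℝ) • ((outer (v 0) (v 0) + outer (v 1) (v 1)) - (outer (v 2) (v 2) + outer (v 3) (v 3)))) = _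
    simp only [minner_smul_left, minner_smul_right, minner_add_left, minner_add_right, minner_sub_left, minner_sub_right, minner_outer, hv']
    simp
    try norm_num
  · show minner ((1/2 : ℝ) • ((outer (v 0) (v 1) + outer (v 1) (v 0)) - (outer (v 2) (v 3) + outer (v 3) (v 2)))) ((1/2 : ℝ) • ((outer (v 0) (v 1) + outer (v 1) (v 0)) + (outer (v 2) (v 3) + outer (v 3) (v 2)))) = _
    simp only [minner_smul_left, minner_smul_right, minner_add_left, minner_add_right, minner_sub_left, minner_sub_right, minner_outer, hv']
    simp
    try norm_num
  · show minner ((1/2 : ℝ) • ((outer (v 0) (v 1) + outer (v 1) (v 0)) - (outer (v 2) (v 3) + outer (v 3) (v 2)))) ((1/2 : ℝ) • ((outer (v 0) (v 1) + outer (v 1) (v 0)) - (outer (v 2) (v 3) + outer (v 3) (v 2)))) = _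
    simp only [minner_smul_left, minner_smul_right, minner_add_left, minner_add_right, minner_sub_left, minner_sub_right, minner_outer, hv']
    simp
    try norm_num



lemma two_mul_sum_range (m : ℕ) :
    2 * ∑ k ∈ Finset.range m, (m - k) = m * (m + 1) := by
  induction m with
  | zero => simp
  | succ m ih =>
    have h2 : ∀ k ∈ Finset.range m, m + 1 - k = (m - k) + 1 := by
      intro k hk; have := Finset.mem_range.1 hk; omega
    have h1 : ∑ k ∈ Finset.range (m + 1), (m + 1 - k)
        = (∑ k ∈ Finset.range m, (m - k)) + m + 1 := by
      rw [Finset.sum_range_succ, Finset.sum_congr rfl h2, Finset.sum_add_distrib]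
      simp
    have h3 : m * (m + 1) + 2 * m + 2 = (m + 1) * (m + 1 + 1) := by ring
    omega

lemma card_le_pairs : 2 * ((Finset.univ : Finset (Fin n × Fin n)).filter
      (fun p => p.1.val ≤ p.2.val)).card = n * (n + 1) := by
  rw [Finset.card_filter, Fintype.sum_prod_type]
  have h1 : ∀ i : Fin n, (∑ j : Fin n, if i.val ≤ j.val then 1 else 0) = n - i.val := by
    intro i
    rw [← Finset.card_filter]
    have : (Finset.univ.filter fun j : Fin n => i.val ≤ j.val) = Finset.Ici i := by
      ext j
      simp only [Finset.mem_filter, Finset.mem_Ici, Finset.mem_univ, true_and, Fin.le_def]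
    rw [this, Fin.card_Ici]
  rw [Finset.sum_congr rfl fun i _ => h1 i, Fin.sum_univ_eq_sum_range (fun k => n - k)]
  exact two_mul_sum_range n

abbrev Idx (n : ℕ) :=
  {p : Fin n × Fin n // p.1.val ≤ p.2.val ∧ ¬(p.1.val = n - 1 ∧ p.2.val = n - 1)}

def coordMap (n : ℕ) : Matrix (Fin n) (Fin n) ℝ →ₗ[ℝ] (Idx n → ℝ) where
  toFun A := fun q => A q.1.1 q.1.2
  map_add' A B := rfl
  map_smul' c A := rfl

lemma card_Idx (hn : 4 ≤ n) : Fintype.card (Idx n) = (n - 1) * (n + 2) / 2 := by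
  rw [Fintype.card_subtype]
  have hmem : ((⟨n - 1, by omega⟩, ⟨n - 1, by omega⟩) : Fin n × Fin n)
      ∈ Finset.univ.filter (fun p : Fin n × Fin n => p.1.val ≤ p.2.val) := by simp
  have hset : (Finset.univ.filter (fun p : Fin n × Fin n =>
        p.1.val ≤ p.2.val ∧ ¬(p.1.val = n - 1 ∧ p.2.val = n - 1)))
      = (Finset.univ.filter (fun p : Fin n × Fin n => p.1.val ≤ p.2.val)).erase
          (⟨n - 1, by omega⟩, ⟨n - 1, by omega⟩) := by
    ext p
    simp only [Finset.mem_filter, Finset.mem_erase, Finset.mem_univ, true_and, ne_eq,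
      Prod.ext_iff, Fin.ext_iff]
    omega
  rw [hset, Finset.card_erase_of_mem hmem]
  have h2 := card_le_pairs (n := n)
  obtain ⟨m, rfl⟩ : ∃ m, n = m + 4 := ⟨n - 4, by omega⟩
  have e1 : (m + 4) * (m + 4 + 1) = m * m + 9 * m + 20 := by ring
  have e2 : (m + 4 - 1) * (m + 4 + 2) = m * m + 9 * m + 18 := by
    have : m + 4 - 1 = m + 3 := by omega
    rw [this]; ring
  omega

lemma isSymm_sum {α : Type*} (s : Finset α) (f : α → Matrix (Fin n) (Fin n) ℝ)
    (h : ∀ a ∈ s, (f a).IsSymm) : (∑ a ∈ s, f a).IsSymm := by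
  refine Matrix.IsSymm.ext fun i j => ?_
  rw [Matrix.sum_apply, Matrix.sum_apply]
  exact Finset.sum_congr rfl fun a ha => (h a ha).apply i j

lemma minner_zero_left (B : Matrix (Fin n) (Fin n) ℝ) : minner 0 B = 0 := by
  simp [minner]

lemma coord_inj (hn : 4 ≤ n) (B : Matrix (Fin n) (Fin n) ℝ) (hs : B.IsSymm)
    (ht : B.trace = 0) (h0 : coordMap n B = 0) : B = 0 := by
  have key : ∀ i j : Fin n, i.val ≤ j.val → ¬(i.val = n - 1 ∧ j.val = n - 1) → B i j = 0 := by
    intro i j h1 h2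
    exact congrFun h0 ⟨(i, j), h1, h2⟩
  set L : Fin n := ⟨n - 1, by omega⟩ with hL
  have hdiag : ∀ i : Fin n, i ≠ L → B i i = 0 := by
    intro i hi
    refine key i i le_rfl fun h => hi (Fin.ext ?_)
    simpa [hL] using h.1
  have hLL : B L L = 0 := by
    have htr : ∑ i, B i i = 0 := by simpa [Matrix.trace, Matrix.diag] using ht
    have hsum : ∑ i, B i i = B L L :=
      Finset.sum_eq_single L (fun b _ hb => hdiag b hb)
        (fun h => absurd (Finset.mem_univ L) h)
    exact hsum.symm.trans htr
  ext i j
  rw [Matrix.zero_apply]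
  rcases le_or_gt i.val j.val with h | h
  · by_cases hc : i.val = n - 1 ∧ j.val = n - 1
    · have hi : i = L := Fin.ext (by simpa [hL] using hc.1)
      have hj : j = L := Fin.ext (by simpa [hL] using hc.2)
      rw [hi, hj]; exact hLL
    · exact key i j h hc
  · rw [hs.apply j i]
    refine key j i (le_of_lt h) fun hc => ?_
    omega

set_option maxHeartbeats 1000000 in
lemma span_key (n : ℕ) (hn : 4 ≤ n)
    (φ : Fin ((n - 1) * (n + 2) / 2) → Matrix (Fin n) (Fin n) ℝ)
    (hsym : ∀ a, (φ a).IsSymm) (htr : ∀ a, (φ a).trace = 0)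
    (horth : ∀ a b, minner (φ a) (φ b) = if a = b then 1 else 0)
    (A : Matrix (Fin n) (Fin n) ℝ) (hA : A.IsSymm) (hAt : A.trace = 0) :
    A ∈ Submodule.span ℝ (Set.range φ) := by
  by_contra hnot
  set ψ : Matrix (Fin n) (Fin n) ℝ := A - ∑ a, minner A (φ a) • φ a with hψdef
  have hψφ : ∀ b, minner ψ (φ b) = 0 := by
    intro b
    rw [hψdef, minner_sub_left, minner_sum_left]
    rw [Finset.sum_congr rfl fun a _ => minner_smul_left (minner A (φ a)) (φ a) (φ b)]
    simp [horth, mul_ite]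
  have hψS : ψ.IsSymm :=
    Matrix.IsSymm.sub hA (isSymm_sum _ _ fun a _ => (hsym a).smul _)
  have hψt : ψ.trace = 0 := by
    rw [hψdef, Matrix.trace_sub, Matrix.trace_sum]
    simp [Matrix.trace_smul, htr, hAt]
  have hψne : ψ ≠ 0 := by
    intro h
    apply hnot
    have h' : A - ∑ a, minner A (φ a) • φ a = 0 := by rw [← hψdef]; exact h
    rw [sub_eq_zero] at h'
    rw [h']
    exact Submodule.sum_mem _ fun a _ => Submodule.smul_mem _ _ (Submodule.subset_span ⟨a, rfl⟩)
  have hψpos := minner_self_pos ψ hψne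
  set F : Fin ((n - 1) * (n + 2) / 2) ⊕ Unit → Matrix (Fin n) (Fin n) ℝ :=
    Sum.elim φ (fun _ => ψ) with hF
  have hFS : ∀ s, (F s).IsSymm := by rintro (a | u); exacts [hsym a, hψS]
  have hFt : ∀ s, (F s).trace = 0 := by rintro (a | u); exacts [htr a, hψt]
  have hli : LinearIndependent ℝ (fun s => coordMap n (F s)) := by
    rw [Fintype.linearIndependent_iff]
    intro g hg
    have hB0 : (∑ s, g s • F s) = 0 := by
      refine coord_inj hn _ (isSymm_sum _ _ fun s _ => (hFS s).smul _) ?_ ?_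
      · rw [Matrix.trace_sum]
        simp [Matrix.trace_smul, hFt]
      · calc coordMap n (∑ s, g s • F s) = ∑ s, g s • coordMap n (F s) := by
              rw [map_sum]
              exact Finset.sum_congr rfl fun s _ => (coordMap n).map_smul (g s) (F s)
          _ = 0 := hg
    have hpair : ∀ T, minner (∑ s, g s • F s) T = ∑ s, g s * minner (F s) T := by
      intro T
      rw [minner_sum_left]
      exact Finset.sum_congr rfl fun s _ => minner_smul_left _ _ _
    rintro (a | u)
    · have h1 : minner (∑ s, g s • F s) (φ a) = g (Sum.inl a) := by
        rw [hpair, Fintype.sum_sum_type]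
        simp only [hF, Sum.elim_inl, Sum.elim_inr]
        simp [horth, hψφ, mul_ite]
      rw [hB0, minner_zero_left] at h1
      exact h1.symm
    · have h1 : minner (∑ s, g s • F s) ψ = g (Sum.inr u) * minner ψ ψ := by
        rw [hpair, Fintype.sum_sum_type]
        simp only [hF, Sum.elim_inl, Sum.elim_inr]
        have hz : ∀ a, minner (φ a) ψ = 0 := fun a => (minner_comm (φ a) ψ).trans (hψφ a)
        simp [hz]
      rw [hB0, minner_zero_left] at h1
      have := h1.symm
      rcases mul_eq_zero.mp this with h | h
      · exact h
      · exact absurd h (ne_of_gt hψpos)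
  have hcard := hli.fintype_card_le_finrank
  rw [Module.finrank_fintype_fun_eq_card, card_Idx hn] at hcard
  simp only [Fintype.card_sum, Fintype.card_fin, Fintype.card_unit] at hcard
  omega

end S5

open S5

set_option maxHeartbeats 2000000

/-- if the eigenvalues `λ₁ ≤ … ≤ λ_N` (`N = (n−1)(n+2)/2`) of the curvature
operator of the second kind of an algebraic curvature operator `R` (`n ≥ 4`), restricted to
traceless symmetric two-tensors, satisfy `λ₁+λ₂+λ₃+λ₄+½λ₅ > 0`, then `R` has positive
isotropic curvature. The eigenvalues are encoded via an orthonormal eigenbasis `φ` of the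
space of traceless symmetric two-tensors diagonalizing `R̊`, with monotone eigenvalue
function `μ`. -/
theorem statement_5 (n : ℕ) (hn : 4 ≤ n)
    (R : Fin n → Fin n → Fin n → Fin n → ℝ) (hR : IsAlgCurv R)
    (φ : Fin ((n-1)*(n+2)/2) → Matrix (Fin n) (Fin n) ℝ)
    (μ : Fin ((n-1)*(n+2)/2) → ℝ) (hmono : Monotone μ)
    (hsym : ∀ a, (φ a).IsSymm) (htr : ∀ a, (φ a).trace = 0)
    (horth : ∀ a b, minner (φ a) (φ b) = if a = b then 1 else 0)
    (hdiag : ∀ a b, Rsec R (φ a) (φ b) = if a = b then μ a else 0)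
    (hpos : 0 <
      μ ⟨0, by have h18 : 3*6 ≤ (n-1)*(n+2) := Nat.mul_le_mul (by omega) (by omega); omega⟩
      + μ ⟨1, by have h18 : 3*6 ≤ (n-1)*(n+2) := Nat.mul_le_mul (by omega) (by omega); omega⟩
      + μ ⟨2, by have h18 : 3*6 ≤ (n-1)*(n+2) := Nat.mul_le_mul (by omega) (by omega); omega⟩
      + μ ⟨3, by have h18 : 3*6 ≤ (n-1)*(n+2) := Nat.mul_le_mul (by omega) (by omega); omega⟩
      + (1/2) * μ ⟨4, by have h18 : 3*6 ≤ (n-1)*(n+2) := Nat.mul_le_mul (by omega) (by omega); omega⟩) :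
    ∀ v : Fin 4 → Fin n → ℝ, OrthonormalFam v →
      0 < Rap R (v 0) (v 2) (v 0) (v 2) + Rap R (v 0) (v 3) (v 0) (v 3)
        + Rap R (v 1) (v 2) (v 1) (v 2) + Rap R (v 1) (v 3) (v 1) (v 3)
        - 2 * Rap R (v 0) (v 1) (v 2) (v 3) := by
  have hN9 : 9 ≤ (n-1)*(n+2)/2 := by
    have h18 : 3*6 ≤ (n-1)*(n+2) := Nat.mul_le_mul (by omega) (by omega)
    omega
  intro v hv
  have hGsym := Gt_isSymm (n := n) (v 0) (v 1) (v 2) (v 3)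
  have hGtr := Gt_trace v hv
  have hGorth := Gt_orth v hv
  have hspan : ∀ i : Fin 7, ∃ c : Fin ((n-1)*(n+2)/2) → ℝ,
      ∑ a, c a • φ a = Gt (v 0) (v 1) (v 2) (v 3) i := fun i =>
    (Submodule.mem_span_range_iff_exists_fun ℝ).1
      (span_key n hn φ hsym htr horth _ (hGsym i) (hGtr i))
  choose c hc using hspan
  -- diagonalization of Rsec on the tensors
  have hRG : ∀ i : Fin 7, Rsec R (Gt (v 0) (v 1) (v 2) (v 3) i) (Gt (v 0) (v 1) (v 2) (v 3) i)
      = ∑ a, (c i a)^2 * μ a := by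
    intro i
    rw [← hc i, Rsec_sum_left]
    have h1 : ∀ a, Rsec R (c i a • φ a) (∑ b, c i b • φ b) = (c i a)^2 * μ a := by
      intro a
      rw [Rsec_smul_left, Rsec_sum_right]
      rw [Finset.sum_congr rfl fun b _ => Rsec_smul_right (c i b) (φ a) (φ b)]
      have : (∑ b, c i b * Rsec R (φ a) (φ b)) = c i a * μ a := by
        simp [hdiag, mul_ite]
      rw [this]; ring
    exact Finset.sum_congr rfl fun a _ => h1 a
  -- coefficient orthonormality
  have hcc : ∀ i j : Fin 7, (∑ a, c i a * c j a) = if i = j then 1 else 0 := by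
    intro i j
    have h := hGorth i j
    rw [← hc i, ← hc j, minner_sum_left] at h
    rw [← h]
    refine Finset.sum_congr rfl fun a _ => ?_
    rw [minner_smul_left, minner_sum_right]
    rw [Finset.sum_congr rfl fun b _ => minner_smul_right (c j b) (φ a) (φ b)]
    simp [horth, mul_ite]
  -- projections of φ a on the tensors
  have hcφ : ∀ (i : Fin 7) a, minner (φ a) (Gt (v 0) (v 1) (v 2) (v 3) i) = c i a := by
    intro i a
    rw [← hc i, minner_sum_right]
    rw [Finset.sum_congr rfl fun b _ => minner_smul_right (c i b) (φ a) (φ b)]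
    simp [horth, mul_ite]
  have hφc : ∀ (i : Fin 7) a, minner (Gt (v 0) (v 1) (v 2) (v 3) i) (φ a) = c i a :=
    fun i a => (minner_comm _ _).trans (hcφ i a)
  -- Bessel inequality
  have hbessel : ∀ a, ∑ i : Fin 7, (c i a)^2 ≤ 1 := by
    intro a
    set Y : Matrix (Fin n) (Fin n) ℝ := ∑ i : Fin 7, c i a • Gt (v 0) (v 1) (v 2) (v 3) i
      with hY
    have h0 := minner_self_nonneg (φ a - Y)
    have mXX : minner (φ a) (φ a) = 1 := by simpa using horth a a
    have mXY : minner (φ a) Y = ∑ i : Fin 7, (c i a)^2 := by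
      rw [hY, minner_sum_right]
      refine Finset.sum_congr rfl fun i _ => ?_
      rw [minner_smul_right, hcφ i a]; ring
    have mYX : minner Y (φ a) = ∑ i : Fin 7, (c i a)^2 := by
      rw [hY, minner_sum_left]
      refine Finset.sum_congr rfl fun i _ => ?_
      rw [minner_smul_left, hφc i a]; ring
    have mYY : minner Y Y = ∑ i : Fin 7, (c i a)^2 := by
      rw [hY, minner_sum_left]
      refine Finset.sum_congr rfl fun i _ => ?_
      rw [minner_smul_left, minner_sum_right]
      rw [Finset.sum_congr rfl fun j _ =>
        minner_smul_right (c j a) (Gt (v 0) (v 1) (v 2) (v 3) i) (Gt (v 0) (v 1) (v 2) (v 3) j)]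
      have : (∑ j : Fin 7, c j a * minner (Gt (v 0) (v 1) (v 2) (v 3) i)
          (Gt (v 0) (v 1) (v 2) (v 3) j)) = c i a := by
        simp [hGorth, mul_ite]
      rw [this]; ring
    have hexp : minner (φ a - Y) (φ a - Y) = 1 - ∑ i : Fin 7, (c i a)^2 := by
      rw [minner_sub_left, minner_sub_right, minner_sub_right, mXX, mXY, mYX, mYY]
      ring
    rw [hexp] at h0
    linarith
  -- weights bounds
  have hwle : ∀ i : Fin 7, wt i ≤ 8/9 := by
    intro i; fin_cases i
    · show (8:ℝ)/9 ≤ 8/9; norm_num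
    · show (8:ℝ)/9 ≤ 8/9; norm_num
    · show (2:ℝ)/9 ≤ 8/9; norm_num
    · show (2:ℝ)/9 ≤ 8/9; norm_num
    · show (8:ℝ)/9 ≤ 8/9; norm_num
    · show (4:ℝ)/9 ≤ 8/9; norm_num
    · show (4:ℝ)/9 ≤ 8/9; norm_num
  have hwge : ∀ i : Fin 7, 0 ≤ wt i := by
    intro i; fin_cases i
    · show (0:ℝ) ≤ 8/9; norm_num
    · show (0:ℝ) ≤ 8/9; norm_num
    · show (0:ℝ) ≤ 2/9; norm_num
    · show (0:ℝ) ≤ 2/9; norm_num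
    · show (0:ℝ) ≤ 8/9; norm_num
    · show (0:ℝ) ≤ 4/9; norm_num
    · show (0:ℝ) ≤ 4/9; norm_num
  have hwsum : (∑ i : Fin 7, wt i) = 4 := by
    rw [Fin.sum_univ_seven]
    show (8:ℝ)/9 + 8/9 + 2/9 + 2/9 + 8/9 + 4/9 + 4/9 = 4
    norm_num
  -- aggregate mass
  set M : Fin ((n-1)*(n+2)/2) → ℝ := fun a => ∑ i : Fin 7, wt i * (c i a)^2 with hM
  have hM0 : ∀ a, 0 ≤ M a := fun a =>
    Finset.sum_nonneg fun i _ => mul_nonneg (hwge i) (sq_nonneg _)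
  have hMle : ∀ a, M a ≤ 8/9 := by
    intro a
    have h1 : M a ≤ ∑ i : Fin 7, (8/9) * (c i a)^2 :=
      Finset.sum_le_sum fun i _ => mul_le_mul_of_nonneg_right (hwle i) (sq_nonneg _)
    have h2 : (∑ i : Fin 7, (8/9 : ℝ) * (c i a)^2) = (8/9) * ∑ i : Fin 7, (c i a)^2 := by
      rw [Finset.mul_sum]
    have h3 := hbessel a
    nlinarith
  have hMsum : (∑ a, M a) = 4 := by
    rw [hM]
    rw [Finset.sum_comm]
    have h1 : ∀ i : Fin 7, (∑ a, wt i * (c i a)^2) = wt i := by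
      intro i
      rw [← Finset.mul_sum]
      have h2 : (∑ a, (c i a)^2) = 1 := by
        have h := hcc i i
        rw [if_pos rfl] at h
        rw [← h]
        exact Finset.sum_congr rfl fun a _ => by ring
      rw [h2, mul_one]
    rw [Finset.sum_congr rfl fun i _ => h1 i]
    exact hwsum
  -- main identity
  have hid := identityA hR (v 0) (v 1) (v 2) (v 3)
  rw [hid]
  have hsum2 : (∑ i : Fin 7, wt i * Rsec R (Gt (v 0) (v 1) (v 2) (v 3) i)
      (Gt (v 0) (v 1) (v 2) (v 3) i)) = ∑ a, M a * μ a := by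
    rw [Finset.sum_congr rfl fun i _ => by rw [hRG i]]
    calc (∑ i : Fin 7, wt i * ∑ a, (c i a)^2 * μ a)
        = ∑ i : Fin 7, ∑ a, wt i * ((c i a)^2 * μ a) := by
          exact Finset.sum_congr rfl fun i _ => Finset.mul_sum _ _ _
      _ = ∑ a, ∑ i : Fin 7, wt i * ((c i a)^2 * μ a) := Finset.sum_comm
      _ = ∑ a, M a * μ a := by
          refine Finset.sum_congr rfl fun a _ => ?_
          rw [hM, Finset.sum_mul]
          exact Finset.sum_congr rfl fun i _ => by ring
  rw [hsum2]
  -- eigenvalue bound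
  have hN9' : 4 < (n-1)*(n+2)/2 := by omega
  set a0 : Fin ((n-1)*(n+2)/2) := ⟨0, by omega⟩
  set a1 : Fin ((n-1)*(n+2)/2) := ⟨1, by omega⟩
  set a2 : Fin ((n-1)*(n+2)/2) := ⟨2, by omega⟩
  set a3 : Fin ((n-1)*(n+2)/2) := ⟨3, by omega⟩
  set a4 : Fin ((n-1)*(n+2)/2) := ⟨4, by omega⟩
  have hpos' : 0 < μ a0 + μ a1 + μ a2 + μ a3 + (1/2) * μ a4 := hpos
  set t : ℝ := μ a4 with ht
  have hstep : ∀ a : Fin ((n-1)*(n+2)/2),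
      (if a.val < 4 then (8/9) * (μ a - t) else 0) ≤ M a * (μ a - t) := by
    intro a
    by_cases h : a.val < 4
    · rw [if_pos h]
      have hμ : μ a ≤ t := hmono (show a ≤ a4 from by
        rw [Fin.le_def]; simp only [a4]; omega)
      exact mul_le_mul_of_nonpos_right (hMle a) (by linarith)
    · rw [if_neg h]
      have hμ : t ≤ μ a := hmono (show a4 ≤ a from by
        rw [Fin.le_def]; simp only [a4]; omega)
      exact mul_nonneg (hM0 a) (by linarith)
  have hfil : Finset.univ.filter (fun a : Fin ((n-1)*(n+2)/2) => a.val < 4)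
      = {a0, a1, a2, a3} := by
    ext x
    simp only [Finset.mem_filter, Finset.mem_univ, true_and, Finset.mem_insert,
      Finset.mem_singleton, Fin.ext_iff, a0, a1, a2, a3]
    omega
  have hsplit : (∑ a, (if a.val < 4 then (8/9) * (μ a - t) else 0))
      = (8/9) * ((μ a0 - t) + (μ a1 - t) + (μ a2 - t) + (μ a3 - t)) := by
    rw [← Finset.sum_filter, hfil]
    rw [Finset.sum_insert (by simp [Fin.ext_iff, a0, a1, a2, a3]),
        Finset.sum_insert (by simp [Fin.ext_iff, a1, a2, a3]),
        Finset.sum_insert (by simp [Fin.ext_iff, a2, a3]),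
        Finset.sum_singleton]
    ring
  have h1 : (∑ a, M a * μ a) = (∑ a, M a * (μ a - t)) + (∑ a, M a) * t := by
    rw [Finset.sum_mul, ← Finset.sum_add_distrib]
    exact Finset.sum_congr rfl fun a _ => by ring
  have h2 : (∑ a, (if a.val < 4 then (8/9) * (μ a - t) else 0)) ≤ ∑ a, M a * (μ a - t) :=
    Finset.sum_le_sum fun a _ => hstep a
  rw [hsplit] at h2
  rw [h1, hMsum]
  linarith
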